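/- arXiv:2603.20774 — 2 statements merged into one kernel-verified Lean document; each statement's English description precedes it below -/
import Mathlib

section
/- Let m, b and n be integers with m ≥ 2, b ≥ 1 and n ≥ (2b+2)m² + (4b+1)m + 2b − 1. Then ρ(K_{n−⌈(n+1)/(m+1)⌉} ∨ ⌈(n+1)/(m+1)⌉K_1) < n − b − 1. -/
open scoped Classical

/-- The largest real eigenvalue of a real matrix. -/
noncomputable def maxEig {V : Type*} [Fintype V] (M : Matrix V V ℝ) : ℝ :=
  sSup {t : ℝ | ∃ x : V → ℝ, x ≠ 0 ∧ M.mulVec x = t • x}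

/-- The adjacency matrix of a simple graph (over ℝ). -/
noncomputable def adjMat {V : Type*} [Fintype V] (G : SimpleGraph V) : Matrix V V ℝ :=
  Matrix.of fun i j => if G.Adj i j then 1 else 0

/-- The adjacency spectral radius ρ(G). -/
noncomputable def adjRad {V : Type*} [Fintype V] (G : SimpleGraph V) : ℝ :=
  maxEig (adjMat G)

/-- The signless Laplacian matrix Q(G) = D(G) + A(G). -/
noncomputable def signlessLapMat {V : Type*} [Fintype V] (G : SimpleGraph V) : Matrix V V ℝ :=
  Matrix.of (fun i j => if i = j then ({w | G.Adj i w}.ncard : ℝ) else 0) + adjMat G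

/-- The signless Laplacian spectral radius q(G). -/
noncomputable def qRad {V : Type*} [Fintype V] (G : SimpleGraph V) : ℝ :=
  maxEig (signlessLapMat G)

/-- The distance matrix of a graph. -/
noncomputable def distMat {V : Type*} [Fintype V] (G : SimpleGraph V) : Matrix V V ℝ :=
  Matrix.of fun i j => (G.dist i j : ℝ)

/-- The distance spectral radius μ(G). -/
noncomputable def distRad {V : Type*} [Fintype V] (G : SimpleGraph V) : ℝ :=
  maxEig (distMat G)

/-- i(G - S): the number of isolated vertices of the subgraph of `G` induced on `V ∖ S`. -/
noncomputable def numIso {V : Type*} (G : SimpleGraph V) (S : Set V) : ℕ :=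
  {v | v ∉ S ∧ ∀ w ∉ S, ¬ G.Adj v w}.ncard

/-- `G` is isolated `t`-tough: `t · i(G−S) ≤ |S|` whenever `i(G−S) ≥ 2`. -/
def IsolatedTough {V : Type*} (G : SimpleGraph V) (t : ℝ) : Prop :=
  ∀ S : Set V, 2 ≤ numIso G S → t * (numIso G S : ℝ) ≤ (S.ncard : ℝ)

/-- `G` has a `{K_{1,j} : m ≤ j ≤ 2m}`-factor: a spanning subgraph each of whose
connected components is isomorphic to a star `K_{1,j}` with `m ≤ j ≤ 2m`. -/
def HasStarFactor {V : Type*} (G : SimpleGraph V) (m : ℕ) : Prop :=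
  ∃ H : SimpleGraph V, H ≤ G ∧ ∀ c : H.ConnectedComponent,
    ∃ j : ℕ, m ≤ j ∧ j ≤ 2 * m ∧
      Nonempty ((SimpleGraph.induce c.supp H) ≃g completeBipartiteGraph (Fin 1) (Fin j))

/-- The graph `K_s ∨ (K_{n-s-t} ∪ t·K_1)` on `Fin n`: the first `s` vertices form a
clique joined to all other vertices, the next `n - t - s` vertices form a clique, and
the last `t` vertices form an independent set. -/
def Gstar (n s t : ℕ) : SimpleGraph (Fin n) where
  Adj u v := u ≠ v ∧ ((u : ℕ) < s ∨ (v : ℕ) < s ∨ ((u : ℕ) < n - t ∧ (v : ℕ) < n - t))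
  symm := by
    constructor
    intro u v h
    refine ⟨h.1.symm, ?_⟩
    rcases h.2 with h | h | h
    · exact Or.inr (Or.inl h)
    · exact Or.inl h
    · exact Or.inr (Or.inr ⟨h.2, h.1⟩)
  loopless := by constructor; intro u h; exact h.1 rfl

/-- The number of edges e(G). -/
noncomputable def edgeCount {V : Type*} (G : SimpleGraph V) : ℕ := G.edgeSet.ncard

/-- The Wiener index W(G) = Σ_{i<j} d(v_i, v_j). -/
noncomputable def wiener {n : ℕ} (G : SimpleGraph (Fin n)) : ℕ :=
  ∑ p ∈ Finset.univ.filter (fun p : Fin n × Fin n => p.1 < p.2), G.dist p.1 p.2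
lemma card_filter_val_lt (n s : ℕ) (hs : s ≤ n) :
    (Finset.univ.filter fun v : Fin n => (v : ℕ) < s).card = s := by
  apply Finset.card_eq_of_bijective (fun i hi => (⟨i, lt_of_lt_of_le hi hs⟩ : Fin n))
  · intro a ha
    simp only [Finset.mem_filter, Finset.mem_univ, true_and] at ha
    exact ⟨(a : ℕ), ha, by ext; rfl⟩
  · intro i hi
    simp [hi]
  · intro i j hi hj h
    simpa using congrArg Fin.val h

lemma keyZ (m b n c : ℤ) (hm : 2 ≤ m) (hb : 1 ≤ b)
    (hn : (2*b+2)*m^2 + (4*b+1)*m + 2*b ≤ n + 1)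
    (h1 : n + 1 ≤ c * (m+1)) (h2 : c * (m+1) ≤ n + m + 1) :
    b*m + 2*b + 2 ≤ c ∧ c + 1 ≤ n ∧ 1 ≤ (n-b-1)*(c-b) - (n-c)*c := by
  have hc : b*m + 2*b + 2 ≤ c := by
    have h3 : (b*m + 2*b + 2) * (m+1) ≤ c * (m+1) := by nlinarith [mul_nonneg (sub_nonneg.mpr hb) (by linarith : (0:ℤ) ≤ m), mul_nonneg (by linarith : (0:ℤ) ≤ b+2) (by nlinarith : (0:ℤ) ≤ m^2 - 4)]
    exact le_of_mul_le_mul_right h3 (by linarith)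
  have hbm : m ≤ b*m := le_mul_of_one_le_left (by linarith) hb
  have hcn : c + 1 ≤ n := by nlinarith [mul_nonneg (by linarith : (0:ℤ) ≤ c - m - 4) (by linarith : (0:ℤ) ≤ m)]
  refine ⟨hc, hcn, ?_⟩
  nlinarith [mul_nonneg (by linarith : (0:ℤ) ≤ b) (by linarith : (0:ℤ) ≤ c*(m+1) - 1 - n),
    mul_nonneg (by linarith : (0:ℤ) ≤ c - b*m - 2*b - 1) (by linarith : (0:ℤ) ≤ c)]


set_option maxHeartbeats 1000000 in
/-- `ρ(K_{n−⌈(n+1)/(m+1)⌉} ∨ ⌈(n+1)/(m+1)⌉K_1) < n − b − 1`. Here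
`⌈(n+1)/(m+1)⌉ = (n + m + 1)/(m + 1)` using natural division. -/
theorem adjRad_G2_lt (m b n : ℕ) (hm : 2 ≤ m) (hb : 1 ≤ b)
    (hn : (2 * b + 2) * m ^ 2 + (4 * b + 1) * m + 2 * b - 1 ≤ n) :
    adjRad (Gstar n (n - (n + m + 1) / (m + 1)) ((n + m + 1) / (m + 1))) <
      (n : ℝ) - b - 1 := by
  set c := (n + m + 1) / (m + 1) with hcdef
  set s' := n - c with hs'def
  -- basic nat division facts
  have hdm := Nat.div_add_mod (n + m + 1) (m + 1)
  have hmlt : (n + m + 1) % (m + 1) < m + 1 := Nat.mod_lt _ (by omega)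
  have h1 : n + 1 ≤ c * (m + 1) := by
    have he : c * (m + 1) + (n + m + 1) % (m + 1) = n + m + 1 := by
      rw [mul_comm]; exact hdm
    have : n + 1 + (n + m + 1) % (m + 1) ≤ c * (m + 1) + (n + m + 1) % (m + 1) := by
      rw [he]; omega
    exact le_of_add_le_add_right this
  have h2 : c * (m + 1) ≤ n + m + 1 := Nat.div_mul_le_self _ _
  have hn1 : (2 * b + 2) * m ^ 2 + (4 * b + 1) * m + 2 * b ≤ n + 1 :=
    Nat.sub_le_iff_le_add.mp hn
  obtain ⟨hcZ, hcnZ, hfZ⟩ := keyZ (m : ℤ) b n c (by exact_mod_cast hm) (by exact_mod_cast hb)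
    (by exact_mod_cast hn1) (by exact_mod_cast h1) (by exact_mod_cast h2)
  -- nat consequences
  have hcb : (b : ℤ) + 1 ≤ c := by nlinarith [(by exact_mod_cast hb : (1:ℤ) ≤ b), (by exact_mod_cast hm : (2:ℤ) ≤ m)]
  have hcn : c + 1 ≤ n := by exact_mod_cast hcnZ
  have hcn' : c ≤ n := by omega
  have hcastS : ((s' : ℕ) : ℝ) = (n : ℝ) - c := by
    rw [hs'def]; push_cast [hcn']; ring
  -- real facts
  have hfR : (1 : ℝ) ≤ ((n:ℝ)-b-1)*((c:ℝ)-b) - ((n:ℝ)-c)*c := by exact_mod_cast hfZ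
  have hcbR : (b : ℝ) + 1 ≤ c := by exact_mod_cast hcb
  have hcnR : (c : ℝ) + 1 ≤ n := by exact_mod_cast hcn
  have hbR : (1 : ℝ) ≤ b := by exact_mod_cast hb
  have hnR2 : (2 : ℝ) ≤ n := by
    have : 2 ≤ n := by omega
    exact_mod_cast this
  set N : ℝ := (n : ℝ) - b - 1 with hN
  set δ : ℝ := 1 / (2 * (n:ℝ) + 1) with hδ
  have hδpos : 0 < δ := by positivity
  have hδmul : δ * (2 * (n:ℝ) + 1) = 1 := by
    rw [hδ]; field_simp
  have hδle : δ ≤ 1/5 := by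
    rw [hδ]
    rw [div_le_div_iff₀ (by linarith) (by norm_num)]
    linarith
  set B : ℝ := max 0 (N - δ) with hB
  have hNpos : (1:ℝ) ≤ N := by rw [hN]; linarith
  have hBN : B < N := by
    rw [hB]
    apply max_lt (by linarith) (by linarith)
  refine lt_of_le_of_lt ?_ hBN
  -- now bound every eigenvalue by B
  rw [adjRad, maxEig]
  apply Real.sSup_le _ (le_max_left 0 _)
  rintro t ⟨x, hx0, hxe⟩
  -- row equations
  have hrow : ∀ u : Fin n, (∑ v, if (Gstar n s' c).Adj u v then x v else 0) = t * x u := by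
    intro u
    have hr := congrFun hxe u
    simpa [adjMat, Matrix.mulVec, dotProduct, ite_mul] using hr
  have hadj1 : ∀ u v : Fin n, (u : ℕ) < s' → ((Gstar n s' c).Adj u v ↔ v ≠ u) := by
    intro u v hu
    constructor
    · exact fun h => h.1.symm
    · intro h; exact ⟨h.symm, Or.inl hu⟩
  have hadj2 : ∀ u v : Fin n, ¬ (u : ℕ) < s' → ((Gstar n s' c).Adj u v ↔ (v : ℕ) < s') := by
    intro u v hu
    constructor
    · rintro ⟨hne, h | h | h⟩
      · exact absurd h hu
      · exact h
      · exact absurd h.1 hu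
    · intro hv
      refine ⟨fun h => hu (by rw [h]; exact hv), Or.inr (Or.inl hv)⟩
  set S1 : ℝ := ∑ v ∈ Finset.univ.filter (fun v : Fin n => (v : ℕ) < s'), x v with hS1
  set S2 : ℝ := ∑ v ∈ Finset.univ.filter (fun v : Fin n => ¬ (v : ℕ) < s'), x v with hS2
  have hS12 : S1 + S2 = ∑ v, x v := Finset.sum_filter_add_sum_filter_not _ _ _
  have hrowA : ∀ u : Fin n, (u : ℕ) < s' → t * x u = (S1 + S2) - x u := by
    intro u hu
    rw [← hrow u, hS12]
    have hpt : ∀ v : Fin n, (if (Gstar n s' c).Adj u v then x v else 0)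
        = x v - (if v = u then x v else 0) := by
      intro v
      rw [if_congr (hadj1 u v hu) rfl rfl]
      by_cases h : v = u
      · simp [h]
      · simp [h]
    have h' : (∑ v, if (Gstar n s' c).Adj u v then x v else 0)
        = ∑ v : Fin n, (x v - if v = u then x v else 0) :=
      Finset.sum_congr rfl (fun v _ => hpt v)
    rw [h', Finset.sum_sub_distrib]
    simp
  have hrowB : ∀ u : Fin n, ¬ (u : ℕ) < s' → t * x u = S1 := by
    intro u hu
    rw [← hrow u]
    calc (∑ v, if (Gstar n s' c).Adj u v then x v else 0)
        = ∑ v : Fin n, (if (v : ℕ) < s' then x v else 0) :=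
          Finset.sum_congr rfl (fun v _ => if_congr (hadj2 u v hu) rfl rfl)
      _ = S1 := (Finset.sum_filter _ _).symm
  have hcard1 : (Finset.univ.filter fun v : Fin n => (v : ℕ) < s').card = s' :=
    card_filter_val_lt n s' (by omega)
  have hcard2 : (Finset.univ.filter fun v : Fin n => ¬ (v : ℕ) < s').card = c := by
    have := Finset.card_filter_add_card_filter_not
      (s := (Finset.univ : Finset (Fin n))) (p := fun v : Fin n => (v : ℕ) < s')
    simp only [Finset.card_univ, Fintype.card_fin] at this
    omega
  have eqA : t * S1 = (s' : ℝ) * (S1 + S2) - S1 := by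
    calc t * S1 = ∑ u ∈ Finset.univ.filter (fun v : Fin n => (v : ℕ) < s'), t * x u := by
          rw [hS1, Finset.mul_sum]
      _ = ∑ u ∈ Finset.univ.filter (fun v : Fin n => (v : ℕ) < s'), ((S1 + S2) - x u) := by
          refine Finset.sum_congr rfl fun u hu => ?_
          exact hrowA u (Finset.mem_filter.mp hu).2
      _ = (s' : ℝ) * (S1 + S2) - S1 := by
          rw [Finset.sum_sub_distrib, Finset.sum_const, hcard1, nsmul_eq_mul, hS1]
  have eqB : t * S2 = (c : ℝ) * S1 := by
    calc t * S2 = ∑ u ∈ Finset.univ.filter (fun v : Fin n => ¬ (v : ℕ) < s'), t * x u := by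
          rw [hS2, Finset.mul_sum]
      _ = ∑ u ∈ Finset.univ.filter (fun v : Fin n => ¬ (v : ℕ) < s'), S1 := by
          refine Finset.sum_congr rfl fun u hu => ?_
          exact hrowB u (Finset.mem_filter.mp hu).2
      _ = (c : ℝ) * S1 := by
          rw [Finset.sum_const, hcard2, nsmul_eq_mul]
  have q1 : (t^2 - ((s' : ℝ) - 1) * t - (s' : ℝ) * (c : ℝ)) * S1 = 0 := by
    linear_combination t * eqA + (s' : ℝ) * eqB
  have q2 : (t^2 - ((s' : ℝ) - 1) * t - (s' : ℝ) * (c : ℝ)) * S2 = 0 := by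
    linear_combination (t - (s' : ℝ) + 1) * eqB + (c : ℝ) * eqA
  -- the common quadratic bound
  have hbound : t^2 - ((s' : ℝ) - 1) * t - (s' : ℝ) * (c : ℝ) = 0 → t ≤ B := by
    intro heq
    rw [hcastS] at heq
    refine le_trans ?_ (le_max_right 0 (N - δ))
    by_contra hcon
    push_neg at hcon
    -- f(N) ≥ 1
    have hfN : N^2 - ((n:ℝ) - c - 1) * N - ((n:ℝ) - c) * c ≥ 1 := by
      rw [hN]; nlinarith [hfR]
    have htpos : 0 < t := by linarith
    have hprod : 0 < (t - (N - δ)) * (t + (N - δ) - ((n:ℝ) - c - 1)) := by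
      apply mul_pos (by linarith)
      linarith
    nlinarith [hprod, hδmul, sq_nonneg δ, hfN, heq]
  by_cases hz1 : S1 = 0
  · by_cases hz2 : S2 = 0
    · -- all sums zero: t ≤ 0
      rcases le_or_gt t 0 with ht | ht
      · exact le_trans ht (le_max_left 0 _)
      · exfalso
        apply hx0
        funext u
        show x u = 0
        by_cases hu : (u : ℕ) < s'
        · have := hrowA u hu
          rw [hz1, hz2] at this
          have : (t + 1) * x u = 0 := by linarith
          rcases mul_eq_zero.mp this with h | h
          · linarith
          · exact h
        · have := hrowB u hu
          rw [hz1] at this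
          rcases mul_eq_zero.mp this with h | h
          · linarith
          · exact h
    · rcases mul_eq_zero.mp q2 with h | h
      · exact hbound h
      · exact absurd h hz2
  · rcases mul_eq_zero.mp q1 with h | h
    · exact hbound h
    · exact absurd h hz1
end

section
/- Let m, b and n be integers with m ≥ 2, b ≥ 1 and n ≥ 3m²b + 3mb + m + 4b. Then μ(K_{mb−1} ∨ (K_{n−(m+1)b+1} ∪ bK_1)) < n + 3b − 1 < μ(K_{n−⌈(n+1)/(m+1)⌉} ∨ ⌈(n+1)/(m+1)⌉K_1). -/
open scoped Classical

section Aux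
open Matrix

lemma eig_le {n : ℕ} (hn : 0 < n) (M : Matrix (Fin n) (Fin n) ℝ) (y : Fin n → ℝ)
    (hy : ∀ i, 0 < y i) (B : ℝ) (h : ∀ i, ∑ j, M i j * y j ≤ B * y i)
    (hM : ∀ i j, 0 ≤ M i j) (t : ℝ) (ht : ∃ x : Fin n → ℝ, x ≠ 0 ∧ M.mulVec x = t • x) :
    t ≤ B := by
  obtain ⟨x, hx, heq⟩ := ht
  obtain ⟨i0, -, hmax⟩ := Finset.exists_max_image Finset.univ (fun i => |x i| / y i)
    ⟨⟨0, hn⟩, Finset.mem_univ _⟩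
  obtain ⟨j, hj⟩ := Function.ne_iff.1 hx
  set c := |x i0| / y i0 with hc
  have hcpos : 0 < c := lt_of_lt_of_le (div_pos (abs_pos.2 hj) (hy j)) (hmax j (Finset.mem_univ _))
  have hkey : ∀ i, |x i| ≤ c * y i := by
    intro i
    have := hmax i (Finset.mem_univ _)
    calc |x i| = |x i| / y i * y i := by rw [div_mul_cancel₀]; exact (hy i).ne'
    _ ≤ c * y i := by apply mul_le_mul_of_nonneg_right this (hy i).le
  have hxi0 : c * y i0 = |x i0| := by rw [hc, div_mul_cancel₀]; exact (hy i0).ne'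
  have h1 : t * x i0 = ∑ j, M i0 j * x j := by
    have := congrFun heq i0
    simpa [Matrix.mulVec, dotProduct, mul_comm] using this.symm
  have h2 : |t| * |x i0| ≤ B * |x i0| := by
    calc |t| * |x i0| = |∑ j, M i0 j * x j| := by rw [← abs_mul, h1]
    _ ≤ ∑ j, |M i0 j * x j| := Finset.abs_sum_le_sum_abs _ _
    _ ≤ ∑ j, M i0 j * (c * y j) := by
        apply Finset.sum_le_sum; intro i _
        rw [abs_mul, abs_of_nonneg (hM i0 i)]
        exact mul_le_mul_of_nonneg_left (hkey i) (hM i0 i)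
    _ = c * ∑ j, M i0 j * y j := by rw [Finset.mul_sum]; congr 1; ext i; ring
    _ ≤ c * (B * y i0) := by apply mul_le_mul_of_nonneg_left (h i0) hcpos.le
    _ = B * (c * y i0) := by ring
    _ = B * |x i0| := by rw [hxi0]
  have hxi0pos : 0 < |x i0| := by rw [← hxi0]; exact mul_pos hcpos (hy i0)
  have := le_of_mul_le_mul_right h2 hxi0pos
  exact le_trans (le_abs_self t) this

lemma maxEig_le {n : ℕ} (hn : 0 < n) (M : Matrix (Fin n) (Fin n) ℝ) (y : Fin n → ℝ)
    (hy : ∀ i, 0 < y i) (B : ℝ) (hB : 0 ≤ B) (h : ∀ i, ∑ j, M i j * y j ≤ B * y i)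
    (hM : ∀ i j, 0 ≤ M i j) : maxEig M ≤ B :=
  Real.sSup_le (fun _ ht => eig_le hn M y hy B h hM _ ht) hB

lemma eigSet_bddAbove {n : ℕ} (hn : 0 < n) (M : Matrix (Fin n) (Fin n) ℝ)
    (hM : ∀ i j, 0 ≤ M i j) :
    BddAbove {t : ℝ | ∃ x : Fin n → ℝ, x ≠ 0 ∧ M.mulVec x = t • x} := by
  haveI : Nonempty (Fin n) := ⟨⟨0, hn⟩⟩
  refine ⟨Finset.univ.sup' Finset.univ_nonempty (fun i => ∑ j, M i j), ?_⟩
  intro t ht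
  refine eig_le hn M (fun _ => 1) (fun _ => one_pos) _ ?_ hM t ht
  intro i
  simpa only [mul_one] using Finset.le_sup' (fun i => ∑ j, M i j) (Finset.mem_univ i)

lemma exists_eig_ge {n : ℕ} (hn : 0 < n) (M : Matrix (Fin n) (Fin n) ℝ)
    (hM : M.IsHermitian) (y : Fin n → ℝ) :
    ∃ t : ℝ, (∃ x : Fin n → ℝ, x ≠ 0 ∧ M.mulVec x = t • x) ∧
      y ⬝ᵥ M.mulVec y ≤ t * (y ⬝ᵥ y) := by
  haveI : Nonempty (Fin n) := ⟨⟨0, hn⟩⟩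
  set b := hM.eigenvectorBasis with hb
  set μ := hM.eigenvalues with hμ
  obtain ⟨i1, -, hi1⟩ := Finset.exists_mem_eq_sup' Finset.univ_nonempty μ
  set t := Finset.univ.sup' Finset.univ_nonempty μ with htdef
  have hμt : ∀ i, μ i ≤ t := fun i => Finset.le_sup' μ (Finset.mem_univ i)
  refine ⟨t, ⟨⇑(b i1), ?_, ?_⟩, ?_⟩
  · intro hzero
    exact b.orthonormal.ne_zero i1 (by ext k; exact congrFun hzero k)
  · rw [hi1]; exact hM.mulVec_eigenvectorBasis i1
  · set Y : EuclideanSpace ℝ (Fin n) := WithLp.toLp 2 y with hY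
    set Z : EuclideanSpace ℝ (Fin n) := WithLp.toLp 2 (M.mulVec y) with hZ
    have hinner : ∀ (u v : EuclideanSpace ℝ (Fin n)), (inner ℝ u v : ℝ) = dotProduct (α := ℝ) (⇑u) (⇑v) := by
      intro u v
      simp [PiLp.inner_apply, RCLike.inner_apply, dotProduct, mul_comm]
    have e1 : y ⬝ᵥ M.mulVec y = ∑ i, (inner ℝ Y (b i) : ℝ) * (inner ℝ (b i) Z : ℝ) := by
      rw [b.sum_inner_mul_inner Y Z, hinner]
    have hMT : Mᵀ = M := by
      ext i j
      have := congrFun (congrFun hM.eq i) j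
      simpa [Matrix.conjTranspose_apply] using this
    have e2 : ∀ i, (inner ℝ (b i) Z : ℝ) = μ i * (inner ℝ (b i) Y : ℝ) := by
      intro i
      rw [hinner, hinner]
      have h3 : dotProduct (α := ℝ) (⇑(b i)) (M.mulVec y) = μ i * dotProduct (α := ℝ) (⇑(b i)) y := by
        rw [Matrix.dotProduct_mulVec]
        rw [show (⇑(b i)) ᵥ* M = M *ᵥ ⇑(b i) by rw [← hMT, Matrix.vecMul_transpose, hMT]]
        rw [hM.mulVec_eigenvectorBasis i]
        simp [smul_dotProduct, smul_eq_mul, hμ, hb]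
      exact h3
    have e3 : y ⬝ᵥ y = ∑ i, (inner ℝ Y (b i) : ℝ) * (inner ℝ (b i) Y : ℝ) := by
      rw [b.sum_inner_mul_inner Y Y, hinner]
    rw [e1, e3, Finset.mul_sum]
    apply Finset.sum_le_sum
    intro i _
    rw [e2 i, real_inner_comm Y (b i)]
    nlinarith [hμt i, mul_self_nonneg (inner ℝ (b i) Y : ℝ)]

lemma Gstar_dist (n s t : ℕ) (hs : 1 ≤ s) (u v : Fin n) :
    (Gstar n s t).dist u v = if u = v then 0 else
      (if (u : ℕ) < s ∨ (v : ℕ) < s ∨ ((u : ℕ) < n - t ∧ (v : ℕ) < n - t) then 1 else 2) := by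
  have hn : 0 < n := u.pos
  set z : Fin n := ⟨0, hn⟩ with hz
  by_cases huv : u = v
  · simp [huv]
  rw [if_neg huv]
  by_cases hadj : (u : ℕ) < s ∨ (v : ℕ) < s ∨ ((u : ℕ) < n - t ∧ (v : ℕ) < n - t)
  · rw [if_pos hadj]
    exact SimpleGraph.dist_eq_one_iff_adj.2 ⟨huv, hadj⟩
  · rw [if_neg hadj]
    push_neg at hadj
    obtain ⟨h1, h2, h3⟩ := hadj
    have huz : u ≠ z := by
      intro h; rw [h] at h1; simp [hz] at h1; omega
    have hvz : v ≠ z := by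
      intro h; rw [h] at h2; simp [hz] at h2; omega
    have hzs : (z : ℕ) < s := by simp [hz]; omega
    have a1 : (Gstar n s t).Adj u z := ⟨huz, Or.inr (Or.inl hzs)⟩
    have a2 : (Gstar n s t).Adj z v := ⟨fun h => hvz h.symm, Or.inl hzs⟩
    let p : (Gstar n s t).Walk u v :=
      SimpleGraph.Walk.cons a1 (SimpleGraph.Walk.cons a2 SimpleGraph.Walk.nil)
    have hle : (Gstar n s t).dist u v ≤ 2 := by
      have h := SimpleGraph.dist_le p
      have hp : p.length = 2 := rfl
      omega
    have hne1 : (Gstar n s t).dist u v ≠ 1 := by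
      intro h
      have hA := SimpleGraph.dist_eq_one_iff_adj.1 h
      rcases hA.2 with h' | h' | h' <;> omega
    have hpos : 0 < (Gstar n s t).dist u v :=
      SimpleGraph.Reachable.pos_dist_of_ne ⟨p⟩ huv
    omega

lemma sum_range_split (a b n : ℕ) (hab : a ≤ b) (hbn : b ≤ n) (f : ℕ → ℝ) (c1 c2 c3 : ℝ)
    (h1 : ∀ v, v < a → f v = c1) (h2 : ∀ v, a ≤ v → v < b → f v = c2)
    (h3 : ∀ v, b ≤ v → v < n → f v = c3) :
    ∑ v ∈ Finset.range n, f v = (a : ℝ) * c1 + ((b - a : ℕ) : ℝ) * c2 + ((n - b : ℕ) : ℝ) * c3 := by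
  rw [Finset.range_eq_Ico, ← Finset.sum_Ico_consecutive _ (Nat.zero_le b) hbn,
      ← Finset.sum_Ico_consecutive _ (Nat.zero_le a) hab]
  have e1 : ∑ v ∈ Finset.Ico 0 a, f v = (a : ℝ) * c1 := by
    rw [Finset.sum_congr rfl (fun v hv => h1 v (Finset.mem_Ico.1 hv).2)]
    simp [mul_comm]
  have e2 : ∑ v ∈ Finset.Ico a b, f v = ((b - a : ℕ) : ℝ) * c2 := by
    rw [Finset.sum_congr rfl (fun v hv => h2 v (Finset.mem_Ico.1 hv).1 (Finset.mem_Ico.1 hv).2)]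
    simp [Nat.card_Ico, mul_comm]
  have e3 : ∑ v ∈ Finset.Ico b n, f v = ((n - b : ℕ) : ℝ) * c3 := by
    rw [Finset.sum_congr rfl (fun v hv => h3 v (Finset.mem_Ico.1 hv).1 (Finset.mem_Ico.1 hv).2)]
    simp [Nat.card_Ico, mul_comm]
  rw [e1, e2, e3]

lemma rowsum (n s t : ℕ) (hs : 1 ≤ s) (hst : s ≤ n - t) (y1 y2 y3 : ℝ) (i : Fin n) :
    (∑ j, distMat (Gstar n s t) i j *
      (if (j : ℕ) < s then y1 else if (j : ℕ) < n - t then y2 else y3)) =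
    if (i : ℕ) < s then
      (s : ℝ) * y1 + ((n - t - s : ℕ) : ℝ) * y2 + ((n - (n - t) : ℕ) : ℝ) * y3 - y1
    else if (i : ℕ) < n - t then
      (s : ℝ) * y1 + ((n - t - s : ℕ) : ℝ) * y2 + 2 * ((n - (n - t) : ℕ) : ℝ) * y3 - y2
    else
      (s : ℝ) * y1 + 2 * ((n - t - s : ℕ) : ℝ) * y2 + 2 * ((n - (n - t) : ℕ) : ℝ) * y3 - 2 * y3
    := by
  have htn : n - t ≤ n := Nat.sub_le n t
  set Y : ℕ → ℝ := fun v => if v < s then y1 else if v < n - t then y2 else y3 with hY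
  set g : ℕ → ℝ := fun v =>
    (if (i : ℕ) < s ∨ v < s ∨ ((i : ℕ) < n - t ∧ v < n - t) then (1 : ℝ) else 2) * Y v with hg
  have hd : ∀ j : Fin n, distMat (Gstar n s t) i j =
      (if (i : ℕ) = (j : ℕ) then 0 else
        if (i : ℕ) < s ∨ (j : ℕ) < s ∨ ((i : ℕ) < n - t ∧ (j : ℕ) < n - t) then 1 else 2) := by
    intro j
    show ((Gstar n s t).dist i j : ℝ) = _
    rw [Gstar_dist n s t hs i j]
    by_cases hij : (i : ℕ) = (j : ℕ)
    · have : i = j := Fin.ext hij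
      simp [this]
    · have hij' : i ≠ j := fun h => hij (by rw [h])
      rw [if_neg hij', if_neg hij]
      split_ifs <;> norm_num
  have step1 : (∑ j, distMat (Gstar n s t) i j * Y (j : ℕ)) =
      ∑ v ∈ Finset.range n, (if (i : ℕ) = v then 0 else
        if (i : ℕ) < s ∨ v < s ∨ ((i : ℕ) < n - t ∧ v < n - t) then (1:ℝ) else 2) * Y v := by
    rw [← Fin.sum_univ_eq_sum_range]
    exact Finset.sum_congr rfl fun j _ => by rw [hd j]
  have step2 : ∑ v ∈ Finset.range n, (if (i : ℕ) = v then 0 else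
        if (i : ℕ) < s ∨ v < s ∨ ((i : ℕ) < n - t ∧ v < n - t) then (1:ℝ) else 2) * Y v
      = (∑ v ∈ Finset.range n, g v) - g (i : ℕ) := by
    have hsplit : ∀ v, (if (i : ℕ) = v then 0 else
        if (i : ℕ) < s ∨ v < s ∨ ((i : ℕ) < n - t ∧ v < n - t) then (1:ℝ) else 2) * Y v
        = g v - (if v = (i : ℕ) then g (i : ℕ) else 0) := by
      intro v
      by_cases h : (i : ℕ) = v
      · subst h; simp [hg]
      · have hvi : ¬ v = (i : ℕ) := fun hh => h hh.symm
        rw [if_neg h, if_neg hvi, sub_zero, hg]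
    rw [Finset.sum_congr rfl (fun v _ => hsplit v), Finset.sum_sub_distrib,
      Finset.sum_ite_eq' (Finset.range n) (i : ℕ)]
    rw [if_pos (Finset.mem_range.2 i.isLt)]
  rw [step1, step2]
  by_cases h1 : (i : ℕ) < s
  · rw [if_pos h1]
    have hgi : g (i : ℕ) = y1 := by simp [hg, hY, h1]
    rw [sum_range_split s (n - t) n hst htn g y1 y2 y3
      (fun v hv => by simp [hg, hY, hv, h1])
      (fun v hv1 hv2 => by simp [hg, hY, hv2, not_lt.2 hv1, h1])
      (fun v hv1 hv2 => by simp [hg, hY, h1, not_lt.2 hv1, not_lt.2 (le_trans hst hv1)]), hgi]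
  · rw [if_neg h1]
    by_cases h2 : (i : ℕ) < n - t
    · rw [if_pos h2]
      have hgi : g (i : ℕ) = y2 := by simp [hg, hY, h1, h2]
      rw [sum_range_split s (n - t) n hst htn g y1 y2 (2 * y3)
        (fun v hv => by simp [hg, hY, hv, h1])
        (fun v hv1 hv2 => by simp [hg, hY, hv2, not_lt.2 hv1, h1, h2])
        (fun v hv1 hv2 => by
          simp [hg, hY, h1, h2, not_lt.2 hv1, not_lt.2 (le_trans hst hv1)]), hgi]
      ring
    · rw [if_neg h2]
      have hgi : g (i : ℕ) = 2 * y3 := by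
        simp [hg, hY, h1, h2, not_lt.2 (le_trans hst (not_lt.1 h2))]
      rw [sum_range_split s (n - t) n hst htn g y1 (2 * y2) (2 * y3)
        (fun v hv => by simp [hg, hY, hv, h1])
        (fun v hv1 hv2 => by simp [hg, hY, hv2, not_lt.2 hv1, h1, h2])
        (fun v hv1 hv2 => by
          simp [hg, hY, h1, h2, not_lt.2 hv1, not_lt.2 (le_trans hst hv1)]), hgi]
      ring

lemma key2Z (m b N k : ℤ) (hm : 2 ≤ m) (hb : 1 ≤ b)
    (hn : 3 * m ^ 2 * b + 3 * m * b + m + 4 * b ≤ N)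
    (hk1 : N + 1 ≤ (m + 1) * k) (hk2 : (m + 1) * k ≤ N + m + 1) :
    3 * b * ((N - k) + 3 * b + 1) + k < k * k := by
  have hN : 24 ≤ N := by nlinarith
  have hMpos : (0:ℤ) < m + 1 := by linarith
  have hkpos : (0:ℤ) ≤ (m+1) * k := by linarith
  have S2 : (N+1)^2 ≤ ((m+1)*k)^2 := by nlinarith
  have S3 : (m+1)^2 * k ≤ (m+1) * (N+m+1) := by nlinarith
  have S4 : (m+1) * (N-k) ≤ m * N - 1 := by nlinarith
  have S5 : 3*b*((m+1)^2 * (N-k)) ≤ 3*b*((m+1) * (m*N-1)) := by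
    nlinarith [mul_le_mul_of_nonneg_left S4 (show (0:ℤ) ≤ 3*b*(m+1) by positivity)]
  have F : (m+1) * (N+m+1) + 3*b*((m+1)*(m*N-1)) + (9*b^2+3*b)*(m+1)^2 < (N+1)^2 := by
    nlinarith [mul_nonneg (mul_nonneg (by linarith : (0:ℤ) ≤ b) (by linarith : (0:ℤ) ≤ b)) (sub_nonneg.2 hm), sq_nonneg (m-3),
      mul_nonneg (sub_nonneg.2 hb) (sub_nonneg.2 hm), sq_nonneg (b-1), sq_nonneg (m-2),
      mul_nonneg (mul_nonneg (sub_nonneg.2 hb) (sub_nonneg.2 hb)) (sub_nonneg.2 hm),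
      mul_nonneg (sub_nonneg.2 hn) (by linarith : (0:ℤ) ≤ N),
      mul_nonneg (mul_nonneg (sub_nonneg.2 hb) (sub_nonneg.2 hm)) (sub_nonneg.2 hm)]
  have H : (m+1)^2 * (3 * b * ((N - k) + 3 * b + 1) + k) < (m+1)^2 * (k*k) := by nlinarith
  have hsq : (0:ℤ) < (m+1)^2 := by positivity
  exact lt_of_mul_lt_mul_left H hsq.le

lemma distMat_nonneg {V : Type*} [Fintype V] (G : SimpleGraph V) (i j : V) :
    0 ≤ distMat G i j := by
  show (0:ℝ) ≤ ((G.dist i j : ℕ) : ℝ)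
  exact Nat.cast_nonneg _

lemma distMat_isHermitian {V : Type*} [Fintype V] [DecidableEq V] (G : SimpleGraph V) :
    (distMat G).IsHermitian := by
  ext i j
  show (starRingEnd ℝ) (distMat G j i) = distMat G i j
  simp only [map_id, RingHom.id_apply, starRingEnd_apply, star_trivial]
  show ((G.dist j i : ℕ) : ℝ) = ((G.dist i j : ℕ) : ℝ)
  rw [SimpleGraph.dist_comm]

end Aux

set_option maxHeartbeats 1000000 in
/-- `μ(K_{mb−1} ∨ (K_{n−(m+1)b+1} ∪ bK_1)) < n + 3b − 1 <
μ(K_{n−⌈(n+1)/(m+1)⌉} ∨ ⌈(n+1)/(m+1)⌉K_1)`. Here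
`⌈(n+1)/(m+1)⌉ = (n + m + 1)/(m + 1)` using natural division. -/


theorem distRad_between (m b n : ℕ) (hm : 2 ≤ m) (hb : 1 ≤ b)
    (hn : 3 * m ^ 2 * b + 3 * m * b + m + 4 * b ≤ n) :
    distRad (Gstar n (m * b - 1) b) < (n : ℝ) + 3 * b - 1 ∧
      (n : ℝ) + 3 * b - 1 <
        distRad (Gstar n (n - (n + m + 1) / (m + 1)) ((n + m + 1) / (m + 1))) := by
  have h24 : 24 ≤ n := by nlinarith
  have hnpos : 0 < n := by omega
  have hbr : (1:ℝ) ≤ (b:ℝ) := by exact_mod_cast hb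
  have hmr : (2:ℝ) ≤ (m:ℝ) := by exact_mod_cast hm
  have hnr : (24:ℝ) ≤ (n:ℝ) := by exact_mod_cast h24
  constructor
  · -- upper bound
    set s := m * b - 1 with hsdef
    have hmb : 2 ≤ m * b := by nlinarith
    have hs : 1 ≤ s := by omega
    have hbn : m * b + b ≤ n := by nlinarith
    have hst : s ≤ n - b := by omega
    set θ : ℝ := 2 - 1 / ((n:ℝ) + b + 1) with hθdef
    have hnb1 : (0:ℝ) < (n:ℝ) + b + 1 := by positivity
    have hθ1 : ((n:ℝ) + b + 1) * θ = 2 * ((n:ℝ) + b + 1) - 1 := by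
      rw [hθdef]; field_simp
    have hθfrac : 1 / ((n:ℝ) + b + 1) ≤ 1 := by
      rw [div_le_one hnb1]; linarith
    have hθpos : 0 < θ := by rw [hθdef]; linarith
    have hθlt2 : θ < 2 := by
      rw [hθdef]
      have : 0 < 1 / ((n:ℝ) + b + 1) := by positivity
      linarith
    -- cast identities
    have e1 : ((n - b - s : ℕ) : ℝ) = (n:ℝ) - b - s := by
      rw [Nat.cast_sub (by omega), Nat.cast_sub (by omega)]
    have e2 : ((n - (n - b) : ℕ) : ℝ) = (b:ℝ) := by
      rw [show n - (n - b) = b from by omega]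
    have e3 : ((s:ℕ) : ℝ) = (m:ℝ) * b - 1 := by
      rw [hsdef, Nat.cast_sub (by omega)]; push_cast; ring
    set V1 : ℝ := (s : ℝ) * 1 + ((n - b - s : ℕ) : ℝ) * 1 + ((n - (n - b) : ℕ) : ℝ) * θ - 1
      with hV1
    set V2 : ℝ := (s : ℝ) * 1 + ((n - b - s : ℕ) : ℝ) * 1 + 2 * ((n - (n - b) : ℕ) : ℝ) * θ - 1
      with hV2
    set V3 : ℝ := (s : ℝ) * 1 + 2 * ((n - b - s : ℕ) : ℝ) * 1 +
      2 * ((n - (n - b) : ℕ) : ℝ) * θ - 2 * θ with hV3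
    set B : ℝ := max (max V1 V2) (V3 / θ) with hB
    have hsr1 : (1:ℝ) ≤ (s:ℝ) := by exact_mod_cast hs
    have hcnn : (0:ℝ) ≤ ((n - b - s : ℕ) : ℝ) := Nat.cast_nonneg _
    have htnn : (0:ℝ) ≤ ((n - (n - b) : ℕ) : ℝ) := Nat.cast_nonneg _
    have hV1nn : 0 ≤ V1 := by
      rw [hV1]; nlinarith
    have hB0 : 0 ≤ B := le_trans hV1nn (le_trans (le_max_left V1 V2) (le_max_left _ _))
    have hL : distRad (Gstar n s b) ≤ B := by
      refine maxEig_le hnpos _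
        (fun j => if (j : ℕ) < s then (1:ℝ) else if (j : ℕ) < n - b then 1 else θ)
        ?_ B hB0 ?_ (fun i j => distMat_nonneg _ i j)
      · intro i
        split_ifs
        · norm_num
        · norm_num
        · exact hθpos
      · intro i
        beta_reduce
        rw [rowsum n s b hs hst 1 1 θ i]
        by_cases h1 : (i : ℕ) < s
        · rw [if_pos h1, if_pos h1]
          exact le_trans (le_trans (le_max_left V1 V2) (le_max_left _ _)) (mul_one B).symm.le
        · rw [if_neg h1, if_neg h1]
          by_cases h2 : (i : ℕ) < n - b
          · rw [if_pos h2, if_pos h2]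
            exact le_trans (le_trans (le_max_right V1 V2) (le_max_left _ _)) (mul_one B).symm.le
          · rw [if_neg h2, if_neg h2]
            have h3 : V3 / θ ≤ B := le_max_right _ _
            calc V3 = V3 / θ * θ := by rw [div_mul_cancel₀]; exact hθpos.ne'
            _ ≤ B * θ := mul_le_mul_of_nonneg_right h3 hθpos.le
    have hBlt : B < (n:ℝ) + 3 * b - 1 := by
      rw [hB]
      apply max_lt (max_lt ?_ ?_) ?_
      · rw [hV1, e1, e2, e3]; nlinarith
      · rw [hV2, e1, e2, e3]; nlinarith
      · rw [div_lt_iff₀ hθpos, hV3, e1, e2, e3]; nlinarith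
    exact lt_of_le_of_lt hL hBlt
  · -- lower bound
    have hdm := Nat.div_add_mod (n + m + 1) (m + 1)
    have hmod : (n + m + 1) % (m + 1) < m + 1 := Nat.mod_lt _ (by omega)
    set k := (n + m + 1) / (m + 1) with hkdef
    have hk1 : n + 1 ≤ (m + 1) * k := by linarith [hdm, hmod]
    have hk2 : (m + 1) * k ≤ n + m + 1 := by linarith [hdm, hmod, Nat.zero_le ((n + m + 1) % (m + 1))]
    clear_value k
    clear hdm hmod hkdef
    have hk0 : 1 ≤ k := by
      rcases Nat.eq_zero_or_pos k with rfl | h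
      · simp at hk1
      · exact h
    have hkn : k + 1 ≤ n := by
      by_contra h
      push_neg at h
      have h5 : (m + 1) * n ≤ (m + 1) * k := Nat.mul_le_mul_left _ (by omega)
      nlinarith [h5, hk2, h24, hm, Nat.mul_le_mul_left m h24]
    set s2 := n - k with hs2def
    have hs2n : s2 + k = n := by omega
    have hs2 : 1 ≤ s2 := by omega
    have hst2 : s2 ≤ n - k := le_refl _
    have hk3b : k < s2 + 3 * b + 1 := by
      by_contra hcon
      push_neg at hcon
      have h3 : 3 * k ≤ (m + 1) * k := Nat.mul_le_mul_right k (by omega)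
      have h5 : 3 * k ≤ n + m + 1 := le_trans h3 hk2
      have h6 : n + 3 * b + 1 ≤ 2 * k := by omega
      have h7 : k + 3 * b ≤ m := by omega
      have h8 : (m + 1) * k ≤ (m + 1) * m := Nat.mul_le_mul_left _ (by omega)
      nlinarith [hk1, h8, hn, hm, hb, Nat.mul_le_mul_left (3 * m ^ 2) hb,
        Nat.mul_le_mul_left (3 * m) hb]
    have hkey : 3 * b * ((s2:ℤ) + 3 * b + 1) + k < (k:ℤ) * k := by
      have hkZ := key2Z (m:ℤ) (b:ℤ) (n:ℤ) (k:ℤ) (by exact_mod_cast hm) (by exact_mod_cast hb)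
        (by exact_mod_cast hn) (by exact_mod_cast hk1) (by exact_mod_cast hk2)
      have hcast : ((s2:ℕ):ℤ) = (n:ℤ) - k := by
        rw [hs2def, Nat.cast_sub (by omega)]
      rw [hcast]
      linarith
    have hkr : 3 * (b:ℝ) * ((s2:ℝ) + 3 * b + 1) + k < (k:ℝ) * k := by exact_mod_cast hkey
    have hk3br : (k:ℝ) < (s2:ℝ) + 3 * b + 1 := by exact_mod_cast hk3b
    set S : ℝ := (s2 : ℝ) with hSdef
    set K : ℝ := (k : ℝ) with hKdef
    set d : ℝ := S + 3 * b + 1 - K with hddef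
    have hd : 0 < d := by rw [hddef, hSdef, hKdef]; linarith [hk3br]
    have hSpos : (0:ℝ) < S := by rw [hSdef]; exact_mod_cast hs2
    have hKpos : (0:ℝ) < K := by
      rw [hKdef]
      exact_mod_cast hk0
    set γ : ℝ := S / d with hγdef
    have hγpos : 0 < γ := div_pos hSpos hd
    -- vector
    set yv : Fin n → ℝ :=
      fun j => if (j : ℕ) < s2 then (1:ℝ) else if (j : ℕ) < n - k then 1 else γ with hyv
    -- cast identities
    have f1 : ((n - k - s2 : ℕ) : ℝ) = 0 := by
      rw [show n - k - s2 = 0 from by omega]; norm_num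
    have f2 : ((n - (n - k) : ℕ) : ℝ) = K := by
      rw [show n - (n - k) = k from by omega, hKdef]
    have hnSK : (n:ℝ) = S + K := by
      rw [hSdef, hKdef, hs2def, Nat.cast_sub (by omega)]; ring
    -- row values
    set R1 : ℝ := S * 1 + 0 * 1 + K * γ - 1 with hR1
    set R3 : ℝ := S * 1 + 2 * 0 * 1 + 2 * K * γ - 2 * γ with hR3
    have hrow : ∀ i : Fin n, (distMat (Gstar n s2 k)).mulVec yv i =
        if (i : ℕ) < s2 then R1 else R3 := by
      intro i
      have hmv : (distMat (Gstar n s2 k)).mulVec yv i = ∑ j, distMat (Gstar n s2 k) i j * yv j := by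
        simp [Matrix.mulVec, dotProduct]
      rw [hmv, hyv]
      beta_reduce
      rw [rowsum n s2 k hs2 hst2 1 1 γ i]
      by_cases h1 : (i : ℕ) < s2
      · rw [if_pos h1, if_pos h1, hR1, f1, f2]
      · have h2 : ¬ ((i : ℕ) < n - k) := by omega
        rw [if_neg h1, if_neg h1, if_neg h2, hR3, f1, f2]
    have hyval : ∀ i : Fin n, yv i = if (i : ℕ) < s2 then (1:ℝ) else γ := by
      intro i
      rw [hyv]
      beta_reduce
      by_cases h1 : (i : ℕ) < s2
      · simp [h1]
      · have h2 : ¬ ((i : ℕ) < n - k) := by omega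
        simp [h1, h2]
    have hqf : dotProduct yv ((distMat (Gstar n s2 k)).mulVec yv) =
        S * R1 + K * (γ * R3) := by
      have : dotProduct yv ((distMat (Gstar n s2 k)).mulVec yv) =
          ∑ i : Fin n, (fun v : ℕ => (if v < s2 then (1:ℝ) else γ) *
            (if v < s2 then R1 else R3)) (i : ℕ) := by
        apply Finset.sum_congr rfl
        intro i _
        rw [hrow i, hyval i]
      rw [this, Fin.sum_univ_eq_sum_range
        (fun v : ℕ => (if v < s2 then (1:ℝ) else γ) * (if v < s2 then R1 else R3)) n]
      rw [sum_range_split s2 s2 n (le_refl _) (by omega) _ (1 * R1) 0 (γ * R3)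
        (fun v hv => by simp [hv]) (fun v hv1 hv2 => by omega)
        (fun v hv1 hv2 => by simp only [if_neg (show ¬ v < s2 by omega)])]
      rw [show ((n - s2 : ℕ) : ℝ) = K from by rw [show n - s2 = k from by omega, hKdef]]
      simp [hSdef]
    have hyy : dotProduct yv yv = S * 1 + K * (γ * γ) := by
      have : dotProduct yv yv =
          ∑ i : Fin n, (fun v : ℕ => (if v < s2 then (1:ℝ) else γ) *
            (if v < s2 then (1:ℝ) else γ)) (i : ℕ) := by
        apply Finset.sum_congr rfl
        intro i _
        rw [hyval i]
      rw [this, Fin.sum_univ_eq_sum_range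
        (fun v : ℕ => (if v < s2 then (1:ℝ) else γ) * (if v < s2 then (1:ℝ) else γ)) n]
      rw [sum_range_split s2 s2 n (le_refl _) (by omega) _ (1 * 1) 0 (γ * γ)
        (fun v hv => by simp [hv]) (fun v hv1 hv2 => by omega)
        (fun v hv1 hv2 => by simp only [if_neg (show ¬ v < s2 by omega)])]
      rw [show ((n - s2 : ℕ) : ℝ) = K from by rw [show n - s2 = k from by omega, hKdef]]
      simp [hSdef]
    obtain ⟨t, htmem, htq⟩ := exists_eig_ge hnpos (distMat (Gstar n s2 k))
      (distMat_isHermitian _) yv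
    have hbdd := eigSet_bddAbove hnpos (distMat (Gstar n s2 k)) (fun i j => distMat_nonneg _ i j)
    have htle : t ≤ distRad (Gstar n s2 k) := le_csSup hbdd htmem
    have hyypos : 0 < S * 1 + K * (γ * γ) := by positivity
    have hγd : γ * d = S := by rw [hγdef, div_mul_cancel₀]; exact hd.ne'
    have hLqf : ((n:ℝ) + 3 * b - 1) * (S * 1 + K * (γ * γ)) < S * R1 + K * (γ * R3) := by
      rw [hnSK, hR1, hR3]
      have key : 0 < K * K - K - 3 * (b:ℝ) * (S + 3 * b + 1) := by linarith [hkr]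
      have hdpos' : (0:ℝ) < S + 3 * b + 1 - K := by linarith [hk3br]
      have heq : S * (S * 1 + 0 * 1 + K * γ - 1) + K * (γ * (S * 1 + 2 * 0 * 1 + 2 * K * γ - 2 * γ))
          - (S + K + 3 * b - 1) * (S * 1 + K * (γ * γ))
          = S * (K * K - K - 3 * b * (S + 3 * b + 1)) / (S + 3 * b + 1 - K) := by
        rw [hγdef, hddef]
        field_simp
        ring
      have hpos : 0 < S * (K * K - K - 3 * b * (S + 3 * b + 1)) / (S + 3 * b + 1 - K) :=
        div_pos (mul_pos hSpos key) hdpos'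
      linarith [heq, hpos]
    have hqflt : ((n:ℝ) + 3 * b - 1) * dotProduct yv yv <
        t * dotProduct yv yv := by
      rw [hyy]
      calc ((n:ℝ) + 3 * b - 1) * (S * 1 + K * (γ * γ)) < S * R1 + K * (γ * R3) := hLqf
      _ = dotProduct yv ((distMat (Gstar n s2 k)).mulVec yv) := hqf.symm
      _ ≤ t * dotProduct yv yv := htq
      _ = t * (S * 1 + K * (γ * γ)) := by rw [hyy]
    have hlt : ((n:ℝ) + 3 * b - 1) < t := by
      have := (mul_lt_mul_iff_of_pos_right (by rw [hyy]; exact hyypos)).1 hqflt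
      exact this
    exact lt_of_lt_of_le hlt htle
end
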